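/- arXiv:2602.02244 — 6 statements merged into one kernel-verified Lean document; each statement's English description precedes it below -/
import Mathlib

section
/- For the tempered softmax distribution π_τ(y) = exp(z(y)/τ)/∑_{y'} exp(z(y')/τ) on a finite set, the derivative of its Shannon entropy with respect to the temperature τ > 0 equals Var_{π_τ}[z]/τ³, where Var_{π_τ}[z] is the variance of the logits under π_τ. -/
/-- Derivative of the entropy of the tempered softmax w.r.t. the temperature
equals `Var_{π_τ}[z] / τ³`. -/
theorem hasDerivAt_entropy_tempered_softmax
    {V : Type*} [Fintype V] [Nonempty V] (z : V → ℝ) (τ : ℝ) (hτ : 0 < τ) :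
    HasDerivAt
      (fun t : ℝ =>
        -∑ y, (Real.exp (z y / t) / ∑ y', Real.exp (z y' / t)) *
          Real.log (Real.exp (z y / t) / ∑ y', Real.exp (z y' / t)))
      (((∑ y, (Real.exp (z y / τ) / ∑ y', Real.exp (z y' / τ)) * (z y) ^ 2) -
          (∑ y, (Real.exp (z y / τ) / ∑ y', Real.exp (z y' / τ)) * z y) ^ 2) / τ ^ 3)
      τ := by
  -- Rewrite the entropy as `log Z(t) - S(t) / (t * Z(t))`.
  have hfun : ∀ t : ℝ,
      -∑ y, (Real.exp (z y / t) / ∑ y', Real.exp (z y' / t)) *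
          Real.log (Real.exp (z y / t) / ∑ y', Real.exp (z y' / t))
      = Real.log (∑ y', Real.exp (z y' / t))
          - (∑ y, Real.exp (z y / t) * z y) / (t * ∑ y', Real.exp (z y' / t)) := by
    intro t
    have hZ : (0:ℝ) < ∑ y', Real.exp (z y' / t) :=
      Finset.sum_pos (fun _ _ => Real.exp_pos _) Finset.univ_nonempty
    have h1 : ∀ y : V, (Real.exp (z y / t) / ∑ y', Real.exp (z y' / t)) *
        Real.log (Real.exp (z y / t) / ∑ y', Real.exp (z y' / t))
        = (Real.exp (z y / t) * z y) / (t * ∑ y', Real.exp (z y' / t))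
          - (Real.exp (z y / t) / ∑ y', Real.exp (z y' / t)) *
              Real.log (∑ y', Real.exp (z y' / t)) := by
      intro y
      rw [Real.log_div (Real.exp_ne_zero _) hZ.ne', Real.log_exp]
      ring
    rw [Finset.sum_congr rfl fun y _ => h1 y, Finset.sum_sub_distrib,
      ← Finset.sum_div, ← Finset.sum_mul, ← Finset.sum_div, div_self hZ.ne', one_mul]
    ring
  have hZ : (0:ℝ) < ∑ y', Real.exp (z y' / τ) :=
    Finset.sum_pos (fun _ _ => Real.exp_pos _) Finset.univ_nonempty
  set Zv := ∑ y', Real.exp (z y' / τ) with hZv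
  set Sv := ∑ y, Real.exp (z y / τ) * z y with hSv
  set Qv := ∑ y, Real.exp (z y / τ) * z y ^ 2 with hQv
  have hexp : ∀ y : V, HasDerivAt (fun t : ℝ => Real.exp (z y / t))
      (Real.exp (z y / τ) * (-(z y) / τ ^ 2)) τ := by
    intro y
    have h1 : HasDerivAt (fun t : ℝ => z y / t) (-(z y) / τ ^ 2) τ := by
      simpa [div_eq_mul_inv, neg_div, mul_comm, mul_div_assoc] using
        (hasDerivAt_inv hτ.ne').const_mul (z y)
    exact h1.exp
  have hZd : HasDerivAt (fun t : ℝ => ∑ y', Real.exp (z y' / t)) (-Sv / τ ^ 2) τ := by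
    have := HasDerivAt.fun_sum (fun y (_ : y ∈ Finset.univ) => hexp y)
    refine this.congr_deriv (Eq.symm ?_)
    rw [hSv, neg_div, Finset.sum_div, ← neg_one_mul, Finset.mul_sum]
    exact Finset.sum_congr rfl fun y _ => by ring
  have hSd : HasDerivAt (fun t : ℝ => ∑ y, Real.exp (z y / t) * z y) (-Qv / τ ^ 2) τ := by
    have := HasDerivAt.fun_sum (fun y (_ : y ∈ Finset.univ) => (hexp y).mul_const (z y))
    refine this.congr_deriv (Eq.symm ?_)
    rw [hQv, neg_div, Finset.sum_div, ← neg_one_mul, Finset.mul_sum]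
    exact Finset.sum_congr rfl fun y _ => by ring
  have htZ : τ * Zv ≠ 0 := mul_ne_zero hτ.ne' hZ.ne'
  have hmul : HasDerivAt (fun t : ℝ => t * ∑ y', Real.exp (z y' / t))
      (1 * Zv + τ * (-Sv / τ ^ 2)) τ := (hasDerivAt_id τ).mul hZd
  have hd : HasDerivAt
      (fun t : ℝ => Real.log (∑ y', Real.exp (z y' / t))
        - (∑ y, Real.exp (z y / t) * z y) / (t * ∑ y', Real.exp (z y' / t)))
      ((-Sv / τ ^ 2) / Zv -
        ((-Qv / τ ^ 2) * (τ * Zv) - Sv * (1 * Zv + τ * (-Sv / τ ^ 2))) / (τ * Zv) ^ 2) τ :=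
    (hZd.log hZ.ne').sub (hSd.div hmul htZ)
  have hd' := hd.congr_of_eventuallyEq
    (Filter.Eventually.of_forall fun t => (hfun t))
  refine hd'.congr_deriv (Eq.symm ?_)
  have key : (∑ y, (Real.exp (z y / τ) / Zv) * (z y) ^ 2) = Qv / Zv := by
    rw [hQv, Finset.sum_div]; exact Finset.sum_congr rfl fun y _ => by ring
  have key2 : (∑ y, (Real.exp (z y / τ) / Zv) * z y) = Sv / Zv := by
    rw [hSv, Finset.sum_div]; exact Finset.sum_congr rfl fun y _ => by ring
  rw [key, key2]
  field_simp
  ring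
end

section
/- The Shannon entropy of the tempered softmax distribution π_τ = softmax(z/τ) is a monotonically non-decreasing function of the temperature τ on (0, ∞). -/
open Finset

section aux
variable {V : Type*} [Fintype V] [Nonempty V]

/-- Gibbs' inequality: entropy ≤ cross entropy. -/
lemma gibbs_aux (p q : V → ℝ) (hp : ∀ y, 0 < p y) (hq : ∀ y, 0 < q y)
    (hps : ∑ y, p y = 1) (hqs : ∑ y, q y = 1) :
    (-∑ y, p y * Real.log (p y)) ≤ -∑ y, p y * Real.log (q y) := by
  have key : ∀ y : V, p y * Real.log (q y) - p y * Real.log (p y) ≤ q y - p y := by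
    intro y
    have h := Real.log_le_sub_one_of_pos (show 0 < q y / p y from div_pos (hq y) (hp y))
    rw [Real.log_div (hq y).ne' (hp y).ne'] at h
    have h2 := mul_le_mul_of_nonneg_left h (hp y).le
    have e : p y * (q y / p y) = q y := by
      rw [mul_div_assoc']
      exact mul_div_cancel_left₀ _ (hp y).ne'
    nlinarith [h2]
  have hsum := Finset.sum_le_sum (fun y (_ : y ∈ Finset.univ) => key y)
  rw [Finset.sum_sub_distrib, Finset.sum_sub_distrib, hps, hqs] at hsum
  linarith

lemma smZ_pos (z : V → ℝ) (t : ℝ) : 0 < ∑ y', Real.exp (z y' / t) :=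
  Finset.sum_pos (fun y _ => Real.exp_pos _) Finset.univ_nonempty

lemma smP_pos (z : V → ℝ) (t : ℝ) (y : V) :
    0 < Real.exp (z y / t) / ∑ y', Real.exp (z y' / t) :=
  div_pos (Real.exp_pos _) (smZ_pos z t)

lemma smP_sum (z : V → ℝ) (t : ℝ) :
    ∑ y, Real.exp (z y / t) / ∑ y', Real.exp (z y' / t) = 1 := by
  rw [← Finset.sum_div, div_self (smZ_pos z t).ne']

lemma smP_log (z : V → ℝ) (t : ℝ) (y : V) :
    Real.log (Real.exp (z y / t) / ∑ y', Real.exp (z y' / t))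
      = z y / t - Real.log (∑ y', Real.exp (z y' / t)) := by
  rw [Real.log_div (Real.exp_pos _).ne' (smZ_pos z t).ne', Real.log_exp]

/-- cross entropy formula -/
lemma cross_aux (z : V → ℝ) (t : ℝ) (p : V → ℝ) (hps : ∑ y, p y = 1) :
    (-∑ y, p y * Real.log (Real.exp (z y / t) / ∑ y', Real.exp (z y' / t)))
      = Real.log (∑ y', Real.exp (z y' / t)) - (∑ y, p y * z y) / t := by
  simp only [smP_log z t, mul_sub]
  rw [Finset.sum_sub_distrib, ← Finset.sum_mul, hps]
  have : ∑ y, p y * (z y / t) = (∑ y, p y * z y) / t := by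
    rw [Finset.sum_div]
    exact Finset.sum_congr rfl fun y _ => (mul_div_assoc _ _ _).symm
  rw [this]; ring

end aux

/-- The entropy of the tempered softmax is non-decreasing in the temperature on `(0, ∞)`. -/
theorem entropy_tempered_softmax_monotone
    {V : Type*} [Fintype V] [Nonempty V] (z : V → ℝ)
    (τ₁ τ₂ : ℝ) (h₁ : 0 < τ₁) (h₁₂ : τ₁ ≤ τ₂) :
    (-∑ y, (Real.exp (z y / τ₁) / ∑ y', Real.exp (z y' / τ₁)) *
        Real.log (Real.exp (z y / τ₁) / ∑ y', Real.exp (z y' / τ₁))) ≤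
    (-∑ y, (Real.exp (z y / τ₂) / ∑ y', Real.exp (z y' / τ₂)) *
        Real.log (Real.exp (z y / τ₂) / ∑ y', Real.exp (z y' / τ₂))) := by
  rcases eq_or_lt_of_le h₁₂ with rfl | hlt
  · exact le_refl _
  have h₂ : 0 < τ₂ := h₁.trans hlt
  set p₁ : V → ℝ := fun y => Real.exp (z y / τ₁) / ∑ y', Real.exp (z y' / τ₁) with hp₁
  set p₂ : V → ℝ := fun y => Real.exp (z y / τ₂) / ∑ y', Real.exp (z y' / τ₂) with hp₂
  set E₁ : ℝ := ∑ y, p₁ y * z y with hE₁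
  set E₂ : ℝ := ∑ y, p₂ y * z y with hE₂
  set L₁ : ℝ := Real.log (∑ y', Real.exp (z y' / τ₁)) with hL₁
  set L₂ : ℝ := Real.log (∑ y', Real.exp (z y' / τ₂)) with hL₂
  set H₁ : ℝ := -∑ y, p₁ y * Real.log (p₁ y) with hH₁
  set H₂ : ℝ := -∑ y, p₂ y * Real.log (p₂ y) with hH₂
  have eq1 : H₁ = L₁ - E₁ / τ₁ := cross_aux z τ₁ p₁ (smP_sum z τ₁)
  have eq2 : H₂ = L₂ - E₂ / τ₂ := cross_aux z τ₂ p₂ (smP_sum z τ₂)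
  have g1 : H₁ ≤ L₂ - E₁ / τ₂ := by
    calc H₁ ≤ -∑ y, p₁ y * Real.log (p₂ y) :=
          gibbs_aux p₁ p₂ (smP_pos z τ₁) (smP_pos z τ₂) (smP_sum z τ₁) (smP_sum z τ₂)
      _ = L₂ - E₁ / τ₂ := cross_aux z τ₂ p₁ (smP_sum z τ₁)
  have g2 : H₂ ≤ L₁ - E₂ / τ₁ := by
    calc H₂ ≤ -∑ y, p₂ y * Real.log (p₁ y) :=
          gibbs_aux p₂ p₁ (smP_pos z τ₂) (smP_pos z τ₁) (smP_sum z τ₂) (smP_sum z τ₁)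
      _ = L₁ - E₂ / τ₁ := cross_aux z τ₁ p₂ (smP_sum z τ₂)
  -- clear denominators
  have m2 : τ₂ * (E₂ / τ₂ - E₁ / τ₂) = E₂ - E₁ := by field_simp
  have m1 : τ₁ * (E₁ / τ₁ - E₂ / τ₁) = E₁ - E₂ := by field_simp
  have k1 : H₁ - H₂ ≤ E₂ / τ₂ - E₁ / τ₂ := by linarith
  have k2 : H₂ - H₁ ≤ E₁ / τ₁ - E₂ / τ₁ := by linarith
  have k1' : τ₂ * (H₁ - H₂) ≤ E₂ - E₁ := by
    exact (mul_le_mul_of_nonneg_left k1 h₂.le).trans m2.le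
  have k2' : τ₁ * (H₂ - H₁) ≤ E₁ - E₂ := by
    exact (mul_le_mul_of_nonneg_left k2 h₁.le).trans m1.le
  nlinarith [k1', k2', hlt]
end

section
/- If the logit function z : V → ℝ is not constant, then the Shannon entropy of the tempered softmax π_τ = softmax(z/τ) is strictly increasing in τ on (0, ∞). -/
/-- Gibbs' inequality, strict version: cross entropy exceeds entropy when the
distributions differ at some point. -/
lemma gibbs_strict {V : Type*} [Fintype V] (p q : V → ℝ)
    (hp : ∀ y, 0 < p y) (hq : ∀ y, 0 < q y)
    (hps : ∑ y, p y = 1) (hqs : ∑ y, q y = 1)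
    (y₀ : V) (hne : p y₀ ≠ q y₀) :
    ∑ y, p y * Real.log (q y) < ∑ y, p y * Real.log (p y) := by
  have key : ∑ y, p y * (Real.log (q y) - Real.log (p y)) < 0 := by
    have hlt : ∑ y, p y * (Real.log (q y) - Real.log (p y))
        < ∑ y, p y * (q y / p y - 1) := by
      apply Finset.sum_lt_sum
      · intro y _
        have hdiv : 0 < q y / p y := div_pos (hq y) (hp y)
        have hlog : Real.log (q y) - Real.log (p y) ≤ q y / p y - 1 := by
          rw [← Real.log_div (ne_of_gt (hq y)) (ne_of_gt (hp y))]
          exact Real.log_le_sub_one_of_pos hdiv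
        exact mul_le_mul_of_nonneg_left hlog (le_of_lt (hp y))
      · refine ⟨y₀, Finset.mem_univ y₀, ?_⟩
        have hdiv : 0 < q y₀ / p y₀ := div_pos (hq y₀) (hp y₀)
        have hne1 : q y₀ / p y₀ ≠ 1 := by
          intro h
          exact hne ((div_eq_one_iff_eq (ne_of_gt (hp y₀))).mp h).symm
        have hlog : Real.log (q y₀) - Real.log (p y₀) < q y₀ / p y₀ - 1 := by
          rw [← Real.log_div (ne_of_gt (hq y₀)) (ne_of_gt (hp y₀))]
          exact Real.log_lt_sub_one_of_pos hdiv hne1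
        exact mul_lt_mul_of_pos_left hlog (hp y₀)
    have heq : ∑ y, p y * (q y / p y - 1) = 0 := by
      have : ∀ y ∈ Finset.univ, p y * (q y / p y - 1) = q y - p y := by
        intro y _
        rw [mul_sub, mul_one, mul_div_cancel₀ _ (ne_of_gt (hp y))]
      rw [Finset.sum_congr rfl this, Finset.sum_sub_distrib, hps, hqs]
      ring
    linarith [heq ▸ hlt]
  have : ∑ y, p y * (Real.log (q y) - Real.log (p y))
      = ∑ y, p y * Real.log (q y) - ∑ y, p y * Real.log (p y) := by
    simp [mul_sub, Finset.sum_sub_distrib]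
  linarith [this ▸ key]

/-- For a non-constant logit function, the entropy of the tempered softmax is
strictly increasing in the temperature on `(0, ∞)`. -/
theorem entropy_tempered_softmax_strictMono
    {V : Type*} [Fintype V] (hcard : 2 ≤ Fintype.card V)
    (z : V → ℝ) (hz : ∃ y₁ y₂ : V, z y₁ ≠ z y₂)
    (τ₁ τ₂ : ℝ) (h₁ : 0 < τ₁) (h₁₂ : τ₁ < τ₂) :
    (-∑ y, (Real.exp (z y / τ₁) / ∑ y', Real.exp (z y' / τ₁)) *
        Real.log (Real.exp (z y / τ₁) / ∑ y', Real.exp (z y' / τ₁))) <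
    (-∑ y, (Real.exp (z y / τ₂) / ∑ y', Real.exp (z y' / τ₂)) *
        Real.log (Real.exp (z y / τ₂) / ∑ y', Real.exp (z y' / τ₂))) := by
  have h₂ : 0 < τ₂ := lt_trans h₁ h₁₂
  set Z₁ : ℝ := ∑ y', Real.exp (z y' / τ₁) with hZ₁
  set Z₂ : ℝ := ∑ y', Real.exp (z y' / τ₂) with hZ₂
  obtain ⟨y₁, y₂, hzne⟩ := hz
  have hZ₁pos : 0 < Z₁ :=
    Finset.sum_pos (fun y _ => Real.exp_pos _) ⟨y₁, Finset.mem_univ y₁⟩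
  have hZ₂pos : 0 < Z₂ :=
    Finset.sum_pos (fun y _ => Real.exp_pos _) ⟨y₁, Finset.mem_univ y₁⟩
  set p : V → ℝ := fun y => Real.exp (z y / τ₁) / Z₁ with hpdef
  set q : V → ℝ := fun y => Real.exp (z y / τ₂) / Z₂ with hqdef
  have hp : ∀ y, 0 < p y := fun y => div_pos (Real.exp_pos _) hZ₁pos
  have hq : ∀ y, 0 < q y := fun y => div_pos (Real.exp_pos _) hZ₂pos
  have hps : ∑ y, p y = 1 := by
    simp only [hpdef, ← Finset.sum_div]
    exact div_self (ne_of_gt hZ₁pos)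
  have hqs : ∑ y, q y = 1 := by
    simp only [hqdef, ← Finset.sum_div]
    exact div_self (ne_of_gt hZ₂pos)
  have hlogp : ∀ y, Real.log (p y) = z y / τ₁ - Real.log Z₁ := by
    intro y
    rw [hpdef]
    simp only []
    rw [Real.log_div (Real.exp_ne_zero _) (ne_of_gt hZ₁pos), Real.log_exp]
  have hlogq : ∀ y, Real.log (q y) = z y / τ₂ - Real.log Z₂ := by
    intro y
    rw [hqdef]
    simp only []
    rw [Real.log_div (Real.exp_ne_zero _) (ne_of_gt hZ₂pos), Real.log_exp]
  -- expansion helper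
  have expand : ∀ (w : V → ℝ), (∑ y, w y = 1) → ∀ (c A : ℝ),
      ∑ y, w y * (z y / c - A) = (∑ y, w y * z y) / c - A := by
    intro w hw c A
    have : ∀ y ∈ Finset.univ, w y * (z y / c - A) = (w y * z y) / c - w y * A := by
      intro y _; ring
    rw [Finset.sum_congr rfl this, Finset.sum_sub_distrib, ← Finset.sum_div,
      ← Finset.sum_mul, hw, one_mul]
  set m₁ : ℝ := ∑ y, p y * z y with hm₁
  set m₂ : ℝ := ∑ y, q y * z y with hm₂
  set A₁ : ℝ := Real.log Z₁ with hA₁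
  set A₂ : ℝ := Real.log Z₂ with hA₂
  have hpp : ∑ y, p y * Real.log (p y) = m₁ / τ₁ - A₁ := by
    simp_rw [hlogp]; exact expand p hps τ₁ A₁
  have hpq : ∑ y, p y * Real.log (q y) = m₁ / τ₂ - A₂ := by
    simp_rw [hlogq]; exact expand p hps τ₂ A₂
  have hqq : ∑ y, q y * Real.log (q y) = m₂ / τ₂ - A₂ := by
    simp_rw [hlogq]; exact expand q hqs τ₂ A₂
  have hqp : ∑ y, q y * Real.log (p y) = m₂ / τ₁ - A₁ := by
    simp_rw [hlogp]; exact expand q hqs τ₁ A₁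
  -- p and q differ somewhere
  have hpqne : p y₁ ≠ q y₁ ∨ p y₂ ≠ q y₂ := by
    by_contra h
    push_neg at h
    obtain ⟨e1, e2⟩ := h
    have l1 : z y₁ / τ₁ - A₁ = z y₁ / τ₂ - A₂ := by
      rw [← hlogp y₁, ← hlogq y₁, e1]
    have l2 : z y₂ / τ₁ - A₁ = z y₂ / τ₂ - A₂ := by
      rw [← hlogp y₂, ← hlogq y₂, e2]
    have : z y₁ * (τ₂ - τ₁) = z y₂ * (τ₂ - τ₁) := by
      have h1 := sub_eq_sub_iff_sub_eq_sub.mp l1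
      field_simp at l1 l2
      nlinarith [l1, l2]
    exact hzne (mul_right_cancel₀ (by linarith : τ₂ - τ₁ ≠ 0) this)
  have G1 : ∑ y, p y * Real.log (q y) < ∑ y, p y * Real.log (p y) := by
    rcases hpqne with h | h
    · exact gibbs_strict p q hp hq hps hqs y₁ h
    · exact gibbs_strict p q hp hq hps hqs y₂ h
  have G2 : ∑ y, q y * Real.log (p y) < ∑ y, q y * Real.log (q y) := by
    rcases hpqne with h | h
    · exact gibbs_strict q p hq hp hqs hps y₁ (Ne.symm h)
    · exact gibbs_strict q p hq hp hqs hps y₂ (Ne.symm h)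
  rw [hpp, hpq] at G1
  rw [hqq, hqp] at G2
  -- Goal: -(∑ p log p) < -(∑ q log q), i.e. m₂/τ₂ - A₂ < m₁/τ₁ - A₁
  have goal2 : m₂ / τ₂ - A₂ < m₁ / τ₁ - A₁ := by
    have hτ : 0 < 1/τ₂ ∧ 1/τ₂ < 1/τ₁ := ⟨by positivity, by
      apply one_div_lt_one_div_of_lt h₁ h₁₂⟩
    obtain ⟨hb2, hb12⟩ := hτ
    have G1' : m₁ * (1/τ₂) - A₂ < m₁ * (1/τ₁) - A₁ := by
      rw [mul_one_div, mul_one_div]; exact G1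
    have G2' : m₂ * (1/τ₁) - A₁ < m₂ * (1/τ₂) - A₂ := by
      rw [mul_one_div, mul_one_div]; exact G2
    clear_value m₁ m₂ A₁ A₂
    clear hpp hpq hqq hqp G1 G2 hpqne hlogp hlogq hps hqs hp hq expand
    have hd : 0 < (m₁ - m₂) * (1/τ₁ - 1/τ₂) := by nlinarith [G1', G2']
    have hm : m₂ < m₁ := by
      by_contra hcon
      push_neg at hcon
      nlinarith [mul_nonneg (sub_nonneg.mpr hcon) (le_of_lt (sub_pos.mpr hb12)), hd]
    have hprod : 0 < (m₁ - m₂) * (1/τ₂) := mul_pos (by linarith) hb2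
    rw [div_eq_mul_one_div m₂ τ₂, div_eq_mul_one_div m₁ τ₁]
    nlinarith [G1', hprod]
  have convp : (∑ y, (Real.exp (z y / τ₁) / Z₁) * Real.log (Real.exp (z y / τ₁) / Z₁))
      = ∑ y, p y * Real.log (p y) := rfl
  have convq : (∑ y, (Real.exp (z y / τ₂) / Z₂) * Real.log (Real.exp (z y / τ₂) / Z₂))
      = ∑ y, q y * Real.log (q y) := rfl
  rw [convp, convq, hpp, hqq]
  clear_value m₁ m₂ A₁ A₂
  linarith
end

section
/- For a non-constant logit vector z on a finite set V and any target entropy value H* strictly between H(softmax(z/τ_min)) and H(softmax(z/τ_max)) with 0 < τ_min < τ_max, there exists a unique temperature τ ∈ (τ_min, τ_max) such that H(softmax(z/τ)) = H*. -/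
open Real Finset

namespace TempEnt

variable {V : Type*} [Fintype V] [Nonempty V]

noncomputable def Zf (z : V → ℝ) (β : ℝ) : ℝ := ∑ y, Real.exp (β * z y)
noncomputable def Z1 (z : V → ℝ) (β : ℝ) : ℝ := ∑ y, z y * Real.exp (β * z y)
noncomputable def Z2 (z : V → ℝ) (β : ℝ) : ℝ := ∑ y, (z y)^2 * Real.exp (β * z y)
noncomputable def gfun (z : V → ℝ) (β : ℝ) : ℝ :=
  Real.log (Zf z β) - β * (Z1 z β / Zf z β)

lemma Zf_pos (z : V → ℝ) (β : ℝ) : 0 < Zf z β :=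
  Finset.sum_pos (fun y _ => Real.exp_pos _) Finset.univ_nonempty

lemma hasDerivAt_Zf (z : V → ℝ) (β : ℝ) :
    HasDerivAt (Zf z) (Z1 z β) β := by
  have : HasDerivAt (fun b => ∑ y : V, Real.exp (b * z y))
      (∑ y : V, Real.exp (β * z y) * z y) β := by
    apply HasDerivAt.fun_sum
    intro y _
    simpa using ((hasDerivAt_id β).mul_const (z y)).exp
  simpa [show Zf z = fun b => ∑ y : V, Real.exp (b * z y) from rfl, Z1, mul_comm] using this

lemma hasDerivAt_Z1 (z : V → ℝ) (β : ℝ) :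
    HasDerivAt (Z1 z) (Z2 z β) β := by
  have : HasDerivAt (fun b => ∑ y : V, z y * Real.exp (b * z y))
      (∑ y : V, z y * (Real.exp (β * z y) * z y)) β := by
    apply HasDerivAt.fun_sum
    intro y _
    simpa using (((hasDerivAt_id β).mul_const (z y)).exp).const_mul (z y)
  simpa [show Z1 z = fun b => ∑ y : V, z y * Real.exp (b * z y) from rfl, Z2, mul_comm, mul_assoc, sq] using this

lemma var_pos (z : V → ℝ) (hz : ∃ y₁ y₂ : V, z y₁ ≠ z y₂) (β : ℝ) :
    0 < Z2 z β * Zf z β - Z1 z β * Z1 z β := by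
  have hZ := Zf_pos z β
  set μ : ℝ := Z1 z β / Zf z β with hμ
  have key : Z2 z β - Z1 z β * Z1 z β / Zf z β
      = ∑ y, (z y - μ)^2 * Real.exp (β * z y) := by
    have : ∑ y, (z y - μ)^2 * Real.exp (β * z y)
        = Z2 z β - 2 * μ * Z1 z β + μ^2 * Zf z β := by
      simp only [Z2, Z1, Zf, sub_sq, Finset.mul_sum, ← Finset.sum_add_distrib,
        ← Finset.sum_sub_distrib]
      apply Finset.sum_congr rfl
      intro y _
      ring
    rw [this, hμ]
    field_simp
    ring
  have hsum : 0 < ∑ y, (z y - μ)^2 * Real.exp (β * z y) := by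
    obtain ⟨y₁, y₂, hne⟩ := hz
    have hy : z y₁ ≠ μ ∨ z y₂ ≠ μ := by
      by_contra h
      push_neg at h
      exact hne (h.1.trans h.2.symm)
    have hnn : ∀ y ∈ Finset.univ, 0 ≤ (z y - μ)^2 * Real.exp (β * z y) :=
      fun y _ => mul_nonneg (sq_nonneg _) (Real.exp_pos _).le
    rcases hy with hy | hy
    · exact Finset.sum_pos' hnn ⟨y₁, Finset.mem_univ _,
        mul_pos (pow_pos (abs_pos.mpr (sub_ne_zero.mpr hy)) 2 |>.trans_le
          (by rw [sq_abs])) (Real.exp_pos _)⟩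
    · exact Finset.sum_pos' hnn ⟨y₂, Finset.mem_univ _,
        mul_pos (pow_pos (abs_pos.mpr (sub_ne_zero.mpr hy)) 2 |>.trans_le
          (by rw [sq_abs])) (Real.exp_pos _)⟩
  have : 0 < Z2 z β - Z1 z β * Z1 z β / Zf z β := key ▸ hsum
  have := mul_pos this hZ
  calc 0 < (Z2 z β - Z1 z β * Z1 z β / Zf z β) * Zf z β := this
    _ = Z2 z β * Zf z β - Z1 z β * Z1 z β := by field_simp

lemma hasDerivAt_gfun (z : V → ℝ) (β : ℝ) :
    HasDerivAt (gfun z)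
      (-(β * ((Z2 z β * Zf z β - Z1 z β * Z1 z β) / (Zf z β)^2))) β := by
  have hZ := Zf_pos z β
  have h1 : HasDerivAt (fun b => Real.log (Zf z b)) (Z1 z β / Zf z β) β :=
    (hasDerivAt_Zf z β).log hZ.ne'
  have h2 : HasDerivAt (fun b => Z1 z b / Zf z b)
      ((Z2 z β * Zf z β - Z1 z β * Z1 z β) / (Zf z β)^2) β :=
    (hasDerivAt_Z1 z β).div (hasDerivAt_Zf z β) hZ.ne'
  have h3 : HasDerivAt (fun b => b * (Z1 z b / Zf z b))
      (1 * (Z1 z β / Zf z β) + β * ((Z2 z β * Zf z β - Z1 z β * Z1 z β) / (Zf z β)^2)) β :=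
    (hasDerivAt_id β).mul h2
  have := h1.fun_sub h3
  exact this.congr_deriv (by ring)

lemma gfun_strictAntiOn (z : V → ℝ) (hz : ∃ y₁ y₂ : V, z y₁ ≠ z y₂) :
    StrictAntiOn (gfun z) (Set.Ioi 0) := by
  apply strictAntiOn_of_deriv_neg (convex_Ioi 0)
  · exact fun β _ => ((hasDerivAt_gfun z β).differentiableAt).continuousAt.continuousWithinAt
  · intro β hβ
    rw [interior_Ioi] at hβ
    rw [(hasDerivAt_gfun z β).deriv]
    have hv := var_pos z hz β
    have hZ := Zf_pos z β
    have : 0 < β * ((Z2 z β * Zf z β - Z1 z β * Z1 z β) / (Zf z β)^2) :=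
      mul_pos hβ (div_pos hv (by positivity))
    linarith

noncomputable def Hfun (z : V → ℝ) (τ : ℝ) : ℝ :=
  -∑ y, (Real.exp (z y / τ) / ∑ y', Real.exp (z y' / τ)) *
      Real.log (Real.exp (z y / τ) / ∑ y', Real.exp (z y' / τ))

lemma Hfun_eq (z : V → ℝ) {τ : ℝ} (hτ : 0 < τ) : Hfun z τ = gfun z (1/τ) := by
  have hrw : ∀ y : V, z y / τ = (1/τ) * z y := fun y => by field_simp [mul_comm]
  have hS : (∑ y' : V, Real.exp (z y' / τ)) = Zf z (1/τ) := by
    simp only [Zf, hrw]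
  have hZ := Zf_pos z (1/τ)
  have hsum1 : ∑ y : V, Real.exp (z y / τ) / Zf z (1/τ) = 1 := by
    rw [← Finset.sum_div]
    rw [show (∑ y : V, Real.exp (z y / τ)) = Zf z (1/τ) from hS]
    exact div_self hZ.ne'
  unfold Hfun gfun
  simp only [hS]
  have : ∀ y : V, Real.exp (z y / τ) / Zf z (1/τ) *
      Real.log (Real.exp (z y / τ) / Zf z (1/τ))
      = Real.exp (z y / τ) / Zf z (1/τ) * (z y / τ)
        - Real.exp (z y / τ) / Zf z (1/τ) * Real.log (Zf z (1/τ)) := by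
    intro y
    rw [Real.log_div (Real.exp_ne_zero _) hZ.ne', Real.log_exp]
    ring
  rw [Finset.sum_congr rfl (fun y _ => this y), Finset.sum_sub_distrib,
    ← Finset.sum_mul, hsum1, one_mul]
  have h2 : ∑ y : V, Real.exp (z y / τ) / Zf z (1/τ) * (z y / τ)
      = (1/τ) * (Z1 z (1/τ) / Zf z (1/τ)) := by
    rw [Z1, Finset.sum_div, Finset.mul_sum]
    apply Finset.sum_congr rfl
    intro y _
    rw [hrw y]
    field_simp
  rw [h2]
  ring

lemma Hfun_strictMonoOn (z : V → ℝ) (hz : ∃ y₁ y₂ : V, z y₁ ≠ z y₂) :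
    StrictMonoOn (Hfun z) (Set.Ioi 0) := by
  intro a ha b hb hab
  rw [Set.mem_Ioi] at ha hb
  rw [Hfun_eq z ha, Hfun_eq z hb]
  exact gfun_strictAntiOn z hz (Set.mem_Ioi.mpr (by positivity))
    (Set.mem_Ioi.mpr (by positivity)) (by
      apply one_div_lt_one_div_of_lt ha hab)

lemma Hfun_continuousOn (z : V → ℝ) : ContinuousOn (Hfun z) (Set.Ioi 0) := by
  have hg : ContinuousOn (gfun z) (Set.Ioi 0) :=
    fun β _ => ((hasDerivAt_gfun z β).differentiableAt).continuousAt.continuousWithinAt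
  have : ContinuousOn (fun τ : ℝ => gfun z (1/τ)) (Set.Ioi 0) := by
    apply hg.comp (ContinuousOn.div continuousOn_const continuousOn_id
        (fun x hx => ne_of_gt hx))
    intro x hx
    have hx' : (0:ℝ) < x := hx
    simp only [Set.mem_Ioi, Pi.div_apply, id]
    positivity
  exact this.congr (fun τ hτ => Hfun_eq z hτ)

end TempEnt

/-- Existence and uniqueness of the temperature matching a target entropy
(justifying binary search). -/
theorem exists_unique_temperature_matching_entropy
    {V : Type*} [Fintype V] (hcard : 2 ≤ Fintype.card V)
    (z : V → ℝ) (hz : ∃ y₁ y₂ : V, z y₁ ≠ z y₂)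
    (τmin τmax Hstar : ℝ) (hmin : 0 < τmin) (hlt : τmin < τmax)
    (hlow : (-∑ y, (Real.exp (z y / τmin) / ∑ y', Real.exp (z y' / τmin)) *
        Real.log (Real.exp (z y / τmin) / ∑ y', Real.exp (z y' / τmin))) < Hstar)
    (hhigh : Hstar < (-∑ y, (Real.exp (z y / τmax) / ∑ y', Real.exp (z y' / τmax)) *
        Real.log (Real.exp (z y / τmax) / ∑ y', Real.exp (z y' / τmax)))) :
    ∃! τ : ℝ, τ ∈ Set.Ioo τmin τmax ∧
      (-∑ y, (Real.exp (z y / τ) / ∑ y', Real.exp (z y' / τ)) *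
          Real.log (Real.exp (z y / τ) / ∑ y', Real.exp (z y' / τ))) = Hstar := by
  have : Nonempty V := Fintype.card_pos_iff.mp (by omega)
  have hsub : Set.Icc τmin τmax ⊆ Set.Ioi (0:ℝ) := fun x hx => lt_of_lt_of_le hmin hx.1
  have hcont : ContinuousOn (TempEnt.Hfun z) (Set.Icc τmin τmax) :=
    (TempEnt.Hfun_continuousOn z).mono hsub
  have hlow' : TempEnt.Hfun z τmin < Hstar := hlow
  have hhigh' : Hstar < TempEnt.Hfun z τmax := hhigh
  have hmem : Hstar ∈ Set.Ioo (TempEnt.Hfun z τmin) (TempEnt.Hfun z τmax) :=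
    ⟨hlow', hhigh'⟩
  obtain ⟨τ, hτmem, hτeq⟩ := intermediate_value_Ioo hlt.le hcont hmem
  refine ⟨τ, ⟨hτmem, hτeq⟩, ?_⟩
  rintro τ' ⟨hτ'mem, hτ'eq⟩
  have hmono := TempEnt.Hfun_strictMonoOn z hz
  have h1 : τ' ∈ Set.Ioi (0:ℝ) := Set.mem_Ioi.mpr (lt_trans hmin hτ'mem.1)
  have h2 : τ ∈ Set.Ioi (0:ℝ) := Set.mem_Ioi.mpr (lt_trans hmin hτmem.1)
  exact hmono.injOn h1 h2 (by rw [show TempEnt.Hfun z τ' = Hstar from hτ'eq,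
    show TempEnt.Hfun z τ = Hstar from hτeq])
end

section
/- Among all probability distributions q on a finite set V whose entropy exceeds that of a fixed full-support distribution π by at least Δ > 0 (assuming H(π) + Δ < log|V|), the unique minimizer of D_KL(q‖π) is the temperature-scaled distribution q*(y) ∝ π(y)^{1/τ̂} for the unique τ̂ > 1 satisfying H(q*) = H(π) + Δ. -/
lemma pointwise_gibbs {p q : ℝ} (hp : 0 < p) (hq : 0 ≤ q) :
    q - p ≤ q * Real.log (q / p) := by
  rcases eq_or_lt_of_le hq with h | h
  · simp [← h]; positivity
  · have h1 : Real.log (p / q) ≤ p / q - 1 := Real.log_le_sub_one_of_pos (by positivity)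
    have h2 : Real.log (q / p) = - Real.log (p / q) := by
      rw [← Real.log_inv]; congr 1; field_simp
    rw [h2]
    have h3 := mul_le_mul_of_nonneg_left h1 h.le
    have h4 : q * (p / q - 1) = p - q := by field_simp
    nlinarith

lemma pointwise_gibbs_eq {p q : ℝ} (hp : 0 < p) (hq : 0 ≤ q)
    (heq : q * Real.log (q / p) = q - p) : q = p := by
  rcases eq_or_lt_of_le hq with h | h
  · exfalso; rw [← h] at heq; simp at heq; linarith
  · by_contra hne
    have hppos : 0 < p / q := by positivity
    have hne1 : p / q ≠ 1 := by
      intro h1; apply hne; field_simp at h1; linarith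
    have h1 : Real.log (p / q) < p / q - 1 := Real.log_lt_sub_one_of_pos hppos hne1
    have h2 : Real.log (q / p) = - Real.log (p / q) := by
      rw [← Real.log_inv]; congr 1; field_simp
    rw [h2] at heq
    have h3 := mul_lt_mul_of_pos_left h1 h
    have h4 : q * (p / q - 1) = p - q := by field_simp
    nlinarith

lemma gibbs_ineq {V : Type*} [Fintype V] (p q : V → ℝ) (hp : ∀ y, 0 < p y)
    (hq : ∀ y, 0 ≤ q y) (hps : ∑ y, p y = 1) (hqs : ∑ y, q y = 1) :
    0 ≤ ∑ y, q y * Real.log (q y / p y) := by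
  have h : ∑ y, (q y - p y) ≤ ∑ y, q y * Real.log (q y / p y) :=
    Finset.sum_le_sum fun y _ => pointwise_gibbs (hp y) (hq y)
  rw [Finset.sum_sub_distrib, hps, hqs] at h
  linarith

lemma gibbs_eq {V : Type*} [Fintype V] (p q : V → ℝ) (hp : ∀ y, 0 < p y)
    (hq : ∀ y, 0 ≤ q y) (hps : ∑ y, p y = 1) (hqs : ∑ y, q y = 1)
    (h0 : ∑ y, q y * Real.log (q y / p y) = 0) : ∀ y, q y = p y := by
  have key : ∀ y ∈ Finset.univ, q y * Real.log (q y / p y) - (q y - p y) = 0 := by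
    apply (Finset.sum_eq_zero_iff_of_nonneg ?_).mp
    · rw [Finset.sum_sub_distrib, Finset.sum_sub_distrib, hps, hqs, h0]; ring
    · intro y _; simp only [sub_nonneg]; exact pointwise_gibbs (hp y) (hq y)
  intro y
  exact pointwise_gibbs_eq (hp y) (hq y) (by have := key y (Finset.mem_univ y); linarith)

lemma key_identity {V : Type*} [Fintype V] [Nonempty V] (w : V → ℝ) (hpos : ∀ y, 0 < w y)
    (β : ℝ) (q : V → ℝ) (hq : ∀ y, 0 ≤ q y) (hqs : ∑ y, q y = 1) :
    β * (∑ y, q y * Real.log (q y / w y)) =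
      (1 - β) * (-∑ y, q y * Real.log (q y)) - Real.log (∑ y', w y' ^ β)
        + ∑ y, q y * Real.log (q y / (w y ^ β / ∑ y', w y' ^ β)) := by
  set Z : ℝ := ∑ y', w y' ^ β with hZdef
  have hZ : 0 < Z := Finset.sum_pos (fun y _ => Real.rpow_pos_of_pos (hpos y) β)
    Finset.univ_nonempty
  have point : ∀ y, β * (q y * Real.log (q y / w y)) =
      -((1 - β) * (q y * Real.log (q y))) - q y * Real.log Z
        + q y * Real.log (q y / (w y ^ β / Z)) := by
    intro y
    rcases eq_or_lt_of_le (hq y) with h | h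
    · simp [← h]
    · have hw := hpos y
      have hwβ : (0:ℝ) < w y ^ β := Real.rpow_pos_of_pos hw β
      rw [Real.log_div (ne_of_gt h) (ne_of_gt hw),
          Real.log_div (ne_of_gt h) (by positivity),
          Real.log_div (ne_of_gt hwβ) (ne_of_gt hZ),
          Real.log_rpow hw]
      ring
  calc β * (∑ y, q y * Real.log (q y / w y))
      = ∑ y, β * (q y * Real.log (q y / w y)) := by rw [Finset.mul_sum]
    _ = ∑ y, (-((1 - β) * (q y * Real.log (q y))) - q y * Real.log Z
          + q y * Real.log (q y / (w y ^ β / Z))) := by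
        exact Finset.sum_congr rfl fun y _ => point y
    _ = (1 - β) * (-∑ y, q y * Real.log (q y)) - Real.log Z
          + ∑ y, q y * Real.log (q y / (w y ^ β / Z)) := by
        rw [Finset.sum_add_distrib, Finset.sum_sub_distrib, Finset.sum_neg_distrib, ← Finset.sum_mul, hqs,
          ← Finset.mul_sum]
        ring

lemma qb_pos {V : Type*} [Fintype V] [Nonempty V] (w : V → ℝ) (hpos : ∀ y, 0 < w y)
    (β : ℝ) : ∀ y, 0 < w y ^ β / ∑ y', w y' ^ β := by
  have hZ : 0 < ∑ y', w y' ^ β := Finset.sum_pos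
    (fun y _ => Real.rpow_pos_of_pos (hpos y) β) Finset.univ_nonempty
  intro y; exact div_pos (Real.rpow_pos_of_pos (hpos y) β) hZ

lemma qb_sum {V : Type*} [Fintype V] [Nonempty V] (w : V → ℝ) (hpos : ∀ y, 0 < w y)
    (β : ℝ) : ∑ y, w y ^ β / ∑ y', w y' ^ β = 1 := by
  have hZ : 0 < ∑ y', w y' ^ β := Finset.sum_pos
    (fun y _ => Real.rpow_pos_of_pos (hpos y) β) Finset.univ_nonempty
  rw [← Finset.sum_div, div_self (ne_of_gt hZ)]

lemma qb_selfKL {V : Type*} [Fintype V] [Nonempty V] (w : V → ℝ) (hpos : ∀ y, 0 < w y)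
    (β : ℝ) :
    ∑ y, (w y ^ β / ∑ y', w y' ^ β) *
      Real.log ((w y ^ β / ∑ y', w y' ^ β) / (w y ^ β / ∑ y', w y' ^ β)) = 0 := by
  apply Finset.sum_eq_zero
  intro y _
  rw [div_self (ne_of_gt (qb_pos w hpos β y)), Real.log_one, mul_zero]

/-- Core lemma: for `0 < β < 1`, among all `q` with entropy at least the entropy `h`
of `qβ`, `qβ` minimizes KL to `w`, and any minimizer equals `qβ`. -/
lemma min_lemma {V : Type*} [Fintype V] [Nonempty V] (w : V → ℝ) (hpos : ∀ y, 0 < w y)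
    (β : ℝ) (hβ0 : 0 < β) (hβ1 : β < 1) (h : ℝ)
    (hH : -∑ y, (w y ^ β / ∑ y', w y' ^ β) *
      Real.log (w y ^ β / ∑ y', w y' ^ β) = h)
    (q : V → ℝ) (hq : ∀ y, 0 ≤ q y) (hqs : ∑ y, q y = 1)
    (hfeas : -∑ y, q y * Real.log (q y) ≥ h) :
    (∑ y, (w y ^ β / ∑ y', w y' ^ β) *
        Real.log ((w y ^ β / ∑ y', w y' ^ β) / w y)) ≤
      ∑ y, q y * Real.log (q y / w y) ∧
    ((∑ y, q y * Real.log (q y / w y)) =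
      (∑ y, (w y ^ β / ∑ y', w y' ^ β) *
        Real.log ((w y ^ β / ∑ y', w y' ^ β) / w y)) →
      ∀ y, q y = w y ^ β / ∑ y', w y' ^ β) := by
  set qb : V → ℝ := fun y => w y ^ β / ∑ y', w y' ^ β with hqb
  have hqbpos := qb_pos w hpos β
  have hqbsum := qb_sum w hpos β
  have idq := key_identity w hpos β q hq hqs
  have idqb := key_identity w hpos β qb (fun y => (hqbpos y).le) hqbsum
  have hA0 : ∑ y, qb y * Real.log (qb y / qb y) = 0 := qb_selfKL w hpos β
  have hA : 0 ≤ ∑ y, q y * Real.log (q y / (w y ^ β / ∑ y', w y' ^ β)) :=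
    gibbs_ineq qb q hqbpos hq hqbsum hqs
  rw [hA0] at idqb
  rw [hH] at idqb
  have hHq : -∑ y, (w y ^ β / ∑ y', w y' ^ β) *
      Real.log (w y ^ β / ∑ y', w y' ^ β) = -∑ y, qb y * Real.log (qb y) := rfl
  have hkey : β * (∑ y, qb y * Real.log (qb y / w y)) ≤
      β * (∑ y, q y * Real.log (q y / w y)) := by
    rw [idq, idqb]
    nlinarith [hfeas, hA, hβ1]
  constructor
  · exact le_of_mul_le_mul_left hkey hβ0
  · intro heq
    have hAz : ∑ y, q y * Real.log (q y / (w y ^ β / ∑ y', w y' ^ β)) = 0 := by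
      have : β * (∑ y, q y * Real.log (q y / w y)) =
          β * (∑ y, qb y * Real.log (qb y / w y)) := by rw [heq]
      rw [idq, idqb] at this
      nlinarith [hfeas, hA, hβ1]
    exact gibbs_eq qb q hqbpos hq hqbsum hqs hAz

lemma entropy_exists {V : Type*} [Fintype V] [Nonempty V] (w : V → ℝ)
    (hpos : ∀ y, 0 < w y) (hsum : ∑ y, w y = 1) (h : ℝ)
    (h1 : -∑ y, w y * Real.log (w y) < h) (h2 : h < Real.log (Fintype.card V)) :
    ∃ β : ℝ, 0 < β ∧ β < 1 ∧
      -∑ y, (w y ^ β / ∑ y', w y' ^ β) * Real.log (w y ^ β / ∑ y', w y' ^ β) = h := by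
  set g : ℝ → ℝ := fun β =>
    -∑ y, (w y ^ β / ∑ y', w y' ^ β) * Real.log (w y ^ β / ∑ y', w y' ^ β) with hg
  have hc1 : ∀ y, Continuous fun β : ℝ => w y ^ β := by
    intro y
    have : (fun β : ℝ => w y ^ β) = fun β => Real.exp (Real.log (w y) * β) := by
      funext β; rw [Real.rpow_def_of_pos (hpos y)]
    rw [this]
    exact Real.continuous_exp.comp (continuous_const.mul continuous_id)
  have hZpos : ∀ β : ℝ, 0 < ∑ y', w y' ^ β := fun β =>
    Finset.sum_pos (fun y _ => Real.rpow_pos_of_pos (hpos y) β) Finset.univ_nonempty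
  have hZc : Continuous fun β : ℝ => ∑ y', w y' ^ β :=
    continuous_finset_sum _ (fun y _ => hc1 y)
  have hqc : ∀ y, Continuous fun β : ℝ => w y ^ β / ∑ y', w y' ^ β := fun y =>
    (hc1 y).div hZc (fun β => ne_of_gt (hZpos β))
  have hgc : Continuous g := by
    apply Continuous.neg
    apply continuous_finset_sum
    intro y _
    exact (hqc y).mul ((hqc y).log (fun β => ne_of_gt (qb_pos w hpos β y)))
  have hcpos : (0:ℝ) < (Fintype.card V : ℝ) := by
    have := Fintype.card_pos (α := V); positivity
  have hg0 : g 0 = Real.log (Fintype.card V) := by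
    have hZ0 : ∑ y' : V, w y' ^ (0:ℝ) = (Fintype.card V : ℝ) := by
      simp [Real.rpow_zero]
    simp only [hg, Real.rpow_zero, hZ0]
    rw [Finset.sum_const, Finset.card_univ, nsmul_eq_mul]
    rw [one_div, Real.log_inv]
    field_simp
    simp only [Finset.sum_const, Finset.card_univ, nsmul_eq_mul, mul_one]
  have hg1 : g 1 = -∑ y, w y * Real.log (w y) := by
    simp only [hg, Real.rpow_one, hsum, div_one]
  have hsub : Set.Icc (g 1) (g 0) ⊆ g '' Set.Icc (0:ℝ) 1 :=
    intermediate_value_Icc' (by norm_num) hgc.continuousOn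
  have hmem : h ∈ Set.Icc (g 1) (g 0) := by
    rw [hg0, hg1]; exact ⟨le_of_lt h1, le_of_lt h2⟩
  obtain ⟨β, hβmem, hβ⟩ := hsub hmem
  refine ⟨β, ?_, ?_, hβ⟩
  · rcases lt_or_eq_of_le hβmem.1 with hlt | heq
    · exact hlt
    · exfalso; rw [← heq] at hβ; rw [hg0] at hβ; linarith
  · rcases lt_or_eq_of_le hβmem.2 with hlt | heq
    · exact hlt
    · exfalso; rw [heq] at hβ; rw [hg1] at hβ; linarith


/-- Temperature scaling is the unique KL-closest higher-entropy teacher: among all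
distributions `q` with `H(q) ≥ H(π) + Δ`, the unique minimizer of `D_KL(q‖π)` is
`q*(y) ∝ π(y)^{1/τhat}` for the unique `τhat > 1` with `H(q*) = H(π) + Δ`. -/
theorem temperature_scaling_is_kl_closest_higher_entropy
    {V : Type*} [Fintype V] (hcard : 2 ≤ Fintype.card V)
    (π : V → ℝ) (hpos : ∀ y, 0 < π y) (hsum : ∑ y, π y = 1)
    (hnonunif : ∃ y₁ y₂ : V, π y₁ ≠ π y₂)
    (Δ : ℝ) (hΔ : 0 < Δ)
    (hroom : (-∑ y, π y * Real.log (π y)) + Δ < Real.log (Fintype.card V)) :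
    ∃ τhat : ℝ, 1 < τhat ∧
      (-∑ y, (π y ^ (1 / τhat) / ∑ y', π y' ^ (1 / τhat)) *
          Real.log (π y ^ (1 / τhat) / ∑ y', π y' ^ (1 / τhat))) =
        (-∑ y, π y * Real.log (π y)) + Δ ∧
      (∀ τ' : ℝ, 1 < τ' →
        (-∑ y, (π y ^ (1 / τ') / ∑ y', π y' ^ (1 / τ')) *
            Real.log (π y ^ (1 / τ') / ∑ y', π y' ^ (1 / τ'))) =
          (-∑ y, π y * Real.log (π y)) + Δ → τ' = τhat) ∧
      (∀ q : V → ℝ, (∀ y, 0 ≤ q y) → ∑ y, q y = 1 →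
        (-∑ y, q y * Real.log (q y)) ≥ (-∑ y, π y * Real.log (π y)) + Δ →
          (∑ y, (π y ^ (1 / τhat) / ∑ y', π y' ^ (1 / τhat)) *
              Real.log ((π y ^ (1 / τhat) / ∑ y', π y' ^ (1 / τhat)) / π y)) ≤
            ∑ y, q y * Real.log (q y / π y)) ∧
      (∀ q : V → ℝ, (∀ y, 0 ≤ q y) → ∑ y, q y = 1 →
        (-∑ y, q y * Real.log (q y)) ≥ (-∑ y, π y * Real.log (π y)) + Δ →
        (∑ y, q y * Real.log (q y / π y)) =
          (∑ y, (π y ^ (1 / τhat) / ∑ y', π y' ^ (1 / τhat)) *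
              Real.log ((π y ^ (1 / τhat) / ∑ y', π y' ^ (1 / τhat)) / π y)) →
          q = fun y => π y ^ (1 / τhat) / ∑ y', π y' ^ (1 / τhat)) := by
  haveI : Nonempty V := Fintype.card_pos_iff.mp (by omega)
  obtain ⟨β, hβ0, hβ1, hβH⟩ := entropy_exists π hpos hsum
    ((-∑ y, π y * Real.log (π y)) + Δ) (by linarith) hroom
  have hinv : 1 / (1 / β) = β := one_div_one_div β
  refine ⟨1 / β, ?_, ?_, ?_, ?_, ?_⟩
  · rw [lt_div_iff₀ hβ0]; linarith
  · rw [hinv]; exact hβH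
  · -- uniqueness of τ'
    intro τ' hτ' hH'
    set β' : ℝ := 1 / τ' with hβ'def
    have hτ'0 : (0:ℝ) < τ' := by linarith
    have hβ'0 : 0 < β' := by positivity
    have hβ'1 : β' < 1 := by rw [hβ'def, div_lt_one hτ'0]; linarith
    have L1 := min_lemma π hpos β hβ0 hβ1 _ hβH
      (fun y => π y ^ β' / ∑ y', π y' ^ β') (fun y => (qb_pos π hpos β' y).le)
      (qb_sum π hpos β') hH'.ge
    have L2 := min_lemma π hpos β' hβ'0 hβ'1 _ hH'
      (fun y => π y ^ β / ∑ y', π y' ^ β) (fun y => (qb_pos π hpos β y).le)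
      (qb_sum π hpos β) hβH.ge
    have heqD : (∑ y, (π y ^ β' / ∑ y', π y' ^ β') *
        Real.log ((π y ^ β' / ∑ y', π y' ^ β') / π y)) =
        ∑ y, (π y ^ β / ∑ y', π y' ^ β) * Real.log ((π y ^ β / ∑ y', π y' ^ β) / π y) :=
      le_antisymm L2.1 L1.1
    have hqq : ∀ y, π y ^ β' / ∑ y', π y' ^ β' = π y ^ β / ∑ y', π y' ^ β :=
      L1.2 heqD
    obtain ⟨y₁, y₂, hne⟩ := hnonunif
    have hZ' : 0 < ∑ y', π y' ^ β' := Finset.sum_pos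
      (fun y _ => Real.rpow_pos_of_pos (hpos y) β') Finset.univ_nonempty
    have hZ : 0 < ∑ y', π y' ^ β := Finset.sum_pos
      (fun y _ => Real.rpow_pos_of_pos (hpos y) β) Finset.univ_nonempty
    have e1 := hqq y₁
    have e2 := hqq y₂
    have hratio : (π y₁ / π y₂) ^ β' = (π y₁ / π y₂) ^ β := by
      rw [Real.div_rpow (hpos y₁).le (hpos y₂).le β',
          Real.div_rpow (hpos y₁).le (hpos y₂).le β]
      have p1 : (0:ℝ) < π y₁ ^ β' := Real.rpow_pos_of_pos (hpos y₁) β'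
      have p2 : (0:ℝ) < π y₂ ^ β' := Real.rpow_pos_of_pos (hpos y₂) β'
      have p3 : (0:ℝ) < π y₁ ^ β := Real.rpow_pos_of_pos (hpos y₁) β
      have p4 : (0:ℝ) < π y₂ ^ β := Real.rpow_pos_of_pos (hpos y₂) β
      rw [div_eq_div_iff hZ'.ne' hZ.ne'] at e1 e2
      rw [div_eq_div_iff p2.ne' p4.ne']
      have hZZ : (∑ y', π y' ^ β) * (∑ y', π y' ^ β') ≠ 0 := (mul_pos hZ hZ').ne'
      apply mul_right_cancel₀ hZZ
      linear_combination (π y₂ ^ β * (∑ y', π y' ^ β')) * e1 -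
        (π y₁ ^ β * (∑ y', π y' ^ β')) * e2
    have hbase : (0:ℝ) < π y₁ / π y₂ := div_pos (hpos y₁) (hpos y₂)
    have hb1 : π y₁ / π y₂ ≠ 1 := by
      intro hc
      exact hne (by
        have h2 := hpos y₂
        field_simp at hc
        linarith)
    have hlog : Real.log (π y₁ / π y₂) ≠ 0 :=
      Real.log_ne_zero_of_pos_of_ne_one hbase hb1
    have hββ : β' = β := by
      have := congrArg Real.log hratio
      rw [Real.log_rpow hbase, Real.log_rpow hbase] at this
      exact mul_right_cancel₀ hlog this
    rw [← hββ, hβ'def, one_div_one_div]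
  · -- minimization
    intro q hq hqs hfeas
    rw [hinv]
    exact (min_lemma π hpos β hβ0 hβ1 _ hβH q hq hqs hfeas).1
  · -- uniqueness of minimizer
    intro q hq hqs hfeas heq
    rw [hinv] at heq ⊢
    funext y
    exact (min_lemma π hpos β hβ0 hβ1 _ hβH q hq hqs hfeas).2 heq y
end

section
/- For a non-uniform full-support distribution π on a finite set V, the function τ ↦ D_KL(q_τ‖π), where q_τ(y) ∝ π(y)^{1/τ}, is strictly increasing on [1, ∞); in particular, increasing the teacher temperature strictly increases the divergence of the teacher from the original policy. -/
open Finset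

/-- Strict Gibbs inequality for positive weights with equal total mass. -/
private lemma gibbs_pos {V : Type*} [Fintype V] (p q : V → ℝ)
    (hp : ∀ y, 0 < p y) (hq : ∀ y, 0 < q y)
    (hpq : ∑ y, p y = ∑ y, q y) (y₀ : V) (hne : p y₀ ≠ q y₀) :
    0 < ∑ y, p y * Real.log (p y / q y) := by
  have key : ∀ y, p y - q y ≤ p y * Real.log (p y / q y) := by
    intro y
    have h1 : Real.log (q y / p y) ≤ q y / p y - 1 :=
      Real.log_le_sub_one_of_pos (div_pos (hq y) (hp y))
    have h2 : Real.log (p y / q y) = -Real.log (q y / p y) := by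
      rw [Real.log_div (hp y).ne' (hq y).ne', Real.log_div (hq y).ne' (hp y).ne']; ring
    have hpy := hp y
    rw [h2]
    have : q y / p y * p y = q y := div_mul_cancel₀ _ (hp y).ne'
    nlinarith
  have keystrict : p y₀ - q y₀ < p y₀ * Real.log (p y₀ / q y₀) := by
    have h1 : Real.log (q y₀ / p y₀) < q y₀ / p y₀ - 1 := by
      apply Real.log_lt_sub_one_of_pos (div_pos (hq y₀) (hp y₀))
      intro h
      rw [div_eq_one_iff_eq (hp y₀).ne'] at h
      exact hne h.symm
    have h2 : Real.log (p y₀ / q y₀) = -Real.log (q y₀ / p y₀) := by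
      rw [Real.log_div (hp y₀).ne' (hq y₀).ne', Real.log_div (hq y₀).ne' (hp y₀).ne']; ring
    have hpy := hp y₀
    rw [h2]
    have : q y₀ / p y₀ * p y₀ = q y₀ := div_mul_cancel₀ _ (hp y₀).ne'
    nlinarith
  have : ∑ y, (p y - q y) < ∑ y, p y * Real.log (p y / q y) :=
    Finset.sum_lt_sum (fun y _ => key y) ⟨y₀, Finset.mem_univ y₀, keystrict⟩
  rwa [Finset.sum_sub_distrib, hpq, sub_self] at this

/-- Pointwise Chebyshev-type inequality. -/
private lemma chebyshev_pt {a c b₁ b₂ : ℝ} (ha : 0 < a) (hc : 0 < c) (hb : b₂ ≤ b₁) :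
    0 ≤ (a ^ b₁ * c ^ b₂ - a ^ b₂ * c ^ b₁) * (Real.log a - Real.log c) := by
  have e1 : a ^ b₁ = a ^ b₂ * a ^ (b₁ - b₂) := by
    rw [← Real.rpow_add ha]; ring_nf
  have e2 : c ^ b₁ = c ^ b₂ * c ^ (b₁ - b₂) := by
    rw [← Real.rpow_add hc]; ring_nf
  have pa := Real.rpow_pos_of_pos ha b₂
  have pc := Real.rpow_pos_of_pos hc b₂
  rcases le_total a c with h | h
  · have hfac : a ^ b₁ * c ^ b₂ ≤ a ^ b₂ * c ^ b₁ := by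
      rw [e1, e2]
      have h3 : a ^ (b₁ - b₂) ≤ c ^ (b₁ - b₂) :=
        Real.rpow_le_rpow ha.le h (by linarith)
      nlinarith [mul_le_mul_of_nonneg_left h3 (mul_pos pa pc).le]
    have hlog : Real.log a ≤ Real.log c := Real.log_le_log ha h
    nlinarith
  · have hfac : a ^ b₂ * c ^ b₁ ≤ a ^ b₁ * c ^ b₂ := by
      rw [e1, e2]
      have h3 : c ^ (b₁ - b₂) ≤ a ^ (b₁ - b₂) :=
        Real.rpow_le_rpow hc.le h (by linarith)
      nlinarith [mul_le_mul_of_nonneg_left h3 (mul_pos pa pc).le]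
    have hlog : Real.log c ≤ Real.log a := Real.log_le_log hc h
    nlinarith

/-- The mean of `log π` under the tilted distribution is monotone in the exponent. -/
private lemma mean_mono {V : Type*} [Fintype V] (π : V → ℝ) (hpos : ∀ y, 0 < π y)
    {b₁ b₂ : ℝ} (hb : b₂ ≤ b₁) :
    (∑ y, π y ^ b₂ * Real.log (π y)) * (∑ y, π y ^ b₁) ≤
      (∑ y, π y ^ b₁ * Real.log (π y)) * (∑ y, π y ^ b₂) := by
  have key : ∀ y z : V, 0 ≤
      (π y ^ b₁ * Real.log (π y) * π z ^ b₂ - π y ^ b₂ * Real.log (π y) * π z ^ b₁) +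
      (π z ^ b₁ * Real.log (π z) * π y ^ b₂ - π z ^ b₂ * Real.log (π z) * π y ^ b₁) := by
    intro y z
    nlinarith [chebyshev_pt (hpos y) (hpos z) hb]
  have hD : 0 ≤ ∑ y, ∑ z, (π y ^ b₁ * Real.log (π y) * π z ^ b₂ -
      π y ^ b₂ * Real.log (π y) * π z ^ b₁) := by
    have h2 : 0 ≤ ∑ y, ∑ z,
        ((π y ^ b₁ * Real.log (π y) * π z ^ b₂ - π y ^ b₂ * Real.log (π y) * π z ^ b₁) +
         (π z ^ b₁ * Real.log (π z) * π y ^ b₂ - π z ^ b₂ * Real.log (π z) * π y ^ b₁)) :=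
      Finset.sum_nonneg fun y _ => Finset.sum_nonneg fun z _ => key y z
    have h3 : ∑ y, ∑ z,
        ((π y ^ b₁ * Real.log (π y) * π z ^ b₂ - π y ^ b₂ * Real.log (π y) * π z ^ b₁) +
         (π z ^ b₁ * Real.log (π z) * π y ^ b₂ - π z ^ b₂ * Real.log (π z) * π y ^ b₁)) =
        (∑ y, ∑ z, (π y ^ b₁ * Real.log (π y) * π z ^ b₂ -
            π y ^ b₂ * Real.log (π y) * π z ^ b₁)) +
        (∑ y, ∑ z, (π z ^ b₁ * Real.log (π z) * π y ^ b₂ -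
            π z ^ b₂ * Real.log (π z) * π y ^ b₁)) := by
      simp only [Finset.sum_add_distrib]
    have h4 : (∑ y : V, ∑ z : V, (π z ^ b₁ * Real.log (π z) * π y ^ b₂ -
        π z ^ b₂ * Real.log (π z) * π y ^ b₁)) =
        ∑ z : V, ∑ y : V, (π z ^ b₁ * Real.log (π z) * π y ^ b₂ -
        π z ^ b₂ * Real.log (π z) * π y ^ b₁) := Finset.sum_comm
    rw [h3, h4] at h2
    linarith
  rw [← sub_nonneg, Finset.sum_mul_sum, Finset.sum_mul_sum, ← Finset.sum_sub_distrib]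
  simp only [← Finset.sum_sub_distrib]
  convert hD using 3

/-- Sum of the tilted distribution against an affine function of `log π`. -/
private lemma sum_q_affine {V : Type*} [Fintype V] [Nonempty V] (π : V → ℝ)
    (hpos : ∀ y, 0 < π y) (b c₁ c₀ : ℝ) :
    ∑ y, (π y ^ b / ∑ y', π y' ^ b) * (c₁ * Real.log (π y) + c₀) =
      c₁ * ((∑ y, π y ^ b * Real.log (π y)) / ∑ y', π y' ^ b) + c₀ := by
  have hZ : 0 < ∑ y', π y' ^ b :=
    Finset.sum_pos (fun y _ => Real.rpow_pos_of_pos (hpos y) b) Finset.univ_nonempty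
  have hsq : ∑ y, π y ^ b / ∑ y', π y' ^ b = 1 := by
    rw [← Finset.sum_div, div_self hZ.ne']
  have step : ∀ y : V, (π y ^ b / ∑ y', π y' ^ b) * (c₁ * Real.log (π y) + c₀) =
      c₁ * (π y ^ b * Real.log (π y) / ∑ y', π y' ^ b) +
      (π y ^ b / ∑ y', π y' ^ b) * c₀ := by
    intro y; ring
  rw [Finset.sum_congr rfl fun y _ => step y, Finset.sum_add_distrib, ← Finset.mul_sum,
    ← Finset.sum_div, ← Finset.sum_mul, hsq, one_mul]

private lemma log_ratio_pi {V : Type*} [Fintype V] [Nonempty V] (π : V → ℝ)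
    (hpos : ∀ y, 0 < π y) (b : ℝ) (y : V) :
    Real.log ((π y ^ b / ∑ y', π y' ^ b) / π y) =
      (b - 1) * Real.log (π y) + (-Real.log (∑ y', π y' ^ b)) := by
  have hZ : 0 < ∑ y', π y' ^ b :=
    Finset.sum_pos (fun y _ => Real.rpow_pos_of_pos (hpos y) b) Finset.univ_nonempty
  rw [div_div, Real.log_div (Real.rpow_pos_of_pos (hpos y) b).ne'
    (mul_pos hZ (hpos y)).ne', Real.log_mul hZ.ne' (hpos y).ne', Real.log_rpow (hpos y)]
  ring

private lemma kl_formula {V : Type*} [Fintype V] [Nonempty V] (π : V → ℝ)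
    (hpos : ∀ y, 0 < π y) (b : ℝ) :
    ∑ y, (π y ^ b / ∑ y', π y' ^ b) * Real.log ((π y ^ b / ∑ y', π y' ^ b) / π y) =
      (b - 1) * ((∑ y, π y ^ b * Real.log (π y)) / ∑ y', π y' ^ b) +
      (-Real.log (∑ y', π y' ^ b)) := by
  rw [Finset.sum_congr rfl fun y _ => by rw [log_ratio_pi π hpos b y]]
  exact sum_q_affine π hpos b _ _

private lemma kl_pair_formula {V : Type*} [Fintype V] [Nonempty V] (π : V → ℝ)
    (hpos : ∀ y, 0 < π y) (b₁ b₂ : ℝ) :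
    ∑ y, (π y ^ b₂ / ∑ y', π y' ^ b₂) *
        Real.log ((π y ^ b₂ / ∑ y', π y' ^ b₂) / (π y ^ b₁ / ∑ y', π y' ^ b₁)) =
      (b₂ - b₁) * ((∑ y, π y ^ b₂ * Real.log (π y)) / ∑ y', π y' ^ b₂) +
      (Real.log (∑ y', π y' ^ b₁) - Real.log (∑ y', π y' ^ b₂)) := by
  have hZ : ∀ b : ℝ, 0 < ∑ y', π y' ^ b := fun b =>
    Finset.sum_pos (fun y _ => Real.rpow_pos_of_pos (hpos y) b) Finset.univ_nonempty
  have hlog : ∀ y : V, Real.log ((π y ^ b₂ / ∑ y', π y' ^ b₂) /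
      (π y ^ b₁ / ∑ y', π y' ^ b₁)) =
      (b₂ - b₁) * Real.log (π y) +
      (Real.log (∑ y', π y' ^ b₁) - Real.log (∑ y', π y' ^ b₂)) := by
    intro y
    rw [Real.log_div (div_pos (Real.rpow_pos_of_pos (hpos y) b₂) (hZ b₂)).ne'
        (div_pos (Real.rpow_pos_of_pos (hpos y) b₁) (hZ b₁)).ne',
      Real.log_div (Real.rpow_pos_of_pos (hpos y) b₂).ne' (hZ b₂).ne',
      Real.log_div (Real.rpow_pos_of_pos (hpos y) b₁).ne' (hZ b₁).ne',
      Real.log_rpow (hpos y), Real.log_rpow (hpos y)]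
    ring
  rw [Finset.sum_congr rfl fun y _ => by rw [hlog y]]
  exact sum_q_affine π hpos b₂ _ _

private lemma kl_key {V : Type*} [Fintype V] (π : V → ℝ) (hpos : ∀ y, 0 < π y)
    (hnonunif : ∃ y₁ y₂ : V, π y₁ ≠ π y₂) {b₁ b₂ : ℝ}
    (hb₂ : 0 < b₂) (h12 : b₂ < b₁) (hb₁ : b₁ ≤ 1) :
    ∑ y, (π y ^ b₁ / ∑ y', π y' ^ b₁) * Real.log ((π y ^ b₁ / ∑ y', π y' ^ b₁) / π y) <
    ∑ y, (π y ^ b₂ / ∑ y', π y' ^ b₂) * Real.log ((π y ^ b₂ / ∑ y', π y' ^ b₂) / π y) := by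
  obtain ⟨u, v, huv⟩ := hnonunif
  have : Nonempty V := ⟨u⟩
  have hZ : ∀ b : ℝ, 0 < ∑ y', π y' ^ b := fun b =>
    Finset.sum_pos (fun y _ => Real.rpow_pos_of_pos (hpos y) b) Finset.univ_nonempty
  -- the two tilted distributions differ somewhere
  have hwitness : ∃ y₀ : V, π y₀ ^ b₂ / ∑ y', π y' ^ b₂ ≠ π y₀ ^ b₁ / ∑ y', π y' ^ b₁ := by
    by_contra hcon
    push_neg at hcon
    have key : ∀ y : V, b₂ * Real.log (π y) + Real.log (∑ y', π y' ^ b₁) =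
        b₁ * Real.log (π y) + Real.log (∑ y', π y' ^ b₂) := by
      intro y
      have hy := hcon y
      rw [div_eq_div_iff (hZ b₂).ne' (hZ b₁).ne'] at hy
      have := congrArg Real.log hy
      rwa [Real.log_mul (Real.rpow_pos_of_pos (hpos y) b₂).ne' (hZ b₁).ne',
        Real.log_mul (Real.rpow_pos_of_pos (hpos y) b₁).ne' (hZ b₂).ne',
        Real.log_rpow (hpos y), Real.log_rpow (hpos y)] at this
    have h5 : (b₂ - b₁) * (Real.log (π u) - Real.log (π v)) = 0 := by
      linear_combination key u - key v
    rcases mul_eq_zero.mp h5 with h | h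
    · linarith
    · have hLuv : Real.log (π u) = Real.log (π v) := by linarith
      exact huv (by rw [← Real.exp_log (hpos u), ← Real.exp_log (hpos v), hLuv])
  obtain ⟨y₀, hy₀⟩ := hwitness
  -- strict Gibbs for the two tilted distributions
  have hKL : 0 < ∑ y, (π y ^ b₂ / ∑ y', π y' ^ b₂) *
      Real.log ((π y ^ b₂ / ∑ y', π y' ^ b₂) / (π y ^ b₁ / ∑ y', π y' ^ b₁)) := by
    apply gibbs_pos (fun y => π y ^ b₂ / ∑ y', π y' ^ b₂)
      (fun y => π y ^ b₁ / ∑ y', π y' ^ b₁)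
      (fun y => div_pos (Real.rpow_pos_of_pos (hpos y) b₂) (hZ b₂))
      (fun y => div_pos (Real.rpow_pos_of_pos (hpos y) b₁) (hZ b₁)) _ y₀ hy₀
    rw [← Finset.sum_div, div_self (hZ b₂).ne', ← Finset.sum_div, div_self (hZ b₁).ne']
  -- mean monotonicity
  have hM : (∑ y, π y ^ b₂ * Real.log (π y)) / (∑ y', π y' ^ b₂) ≤
      (∑ y, π y ^ b₁ * Real.log (π y)) / (∑ y', π y' ^ b₁) := by
    rw [div_le_div_iff₀ (hZ b₂) (hZ b₁)]
    exact mean_mono π hpos h12.le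
  rw [kl_formula π hpos b₁, kl_formula π hpos b₂]
  rw [kl_pair_formula π hpos b₁ b₂] at hKL
  set M₁ := (∑ y, π y ^ b₁ * Real.log (π y)) / (∑ y', π y' ^ b₁) with hM₁
  set M₂ := (∑ y, π y ^ b₂ * Real.log (π y)) / (∑ y', π y' ^ b₂) with hM₂
  have hprod : 0 ≤ (1 - b₁) * (M₁ - M₂) := mul_nonneg (by linarith) (by linarith)
  nlinarith [hKL, hprod]

/-- For a non-uniform full-support distribution, the KL divergence of the
temperature-scaled teacher from the original policy is strictly increasing in the
temperature on `[1, ∞)`. -/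
theorem kl_of_power_scaled_strictMonoOn
    {V : Type*} [Fintype V] (hcard : 2 ≤ Fintype.card V)
    (π : V → ℝ) (hpos : ∀ y, 0 < π y) (hsum : ∑ y, π y = 1)
    (hnonunif : ∃ y₁ y₂ : V, π y₁ ≠ π y₂) :
    StrictMonoOn
      (fun τ : ℝ => ∑ y, (π y ^ (1 / τ) / ∑ y', π y' ^ (1 / τ)) *
          Real.log ((π y ^ (1 / τ) / ∑ y', π y' ^ (1 / τ)) / π y))
      (Set.Ici (1 : ℝ)) := by
  intro τ₁ hτ₁ τ₂ hτ₂ hlt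
  have hτ₁' : (1:ℝ) ≤ τ₁ := hτ₁
  have hτ₁pos : (0:ℝ) < τ₁ := by linarith
  have hτ₂pos : (0:ℝ) < τ₂ := by linarith
  exact kl_key π hpos hnonunif (by positivity)
    (one_div_lt_one_div_of_lt hτ₁pos hlt)
    (by rw [div_le_one hτ₁pos]; linarith)
end
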